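/- Let R be a commutative ring, let k ≥ 2, let x_1, …, x_k be invertible elements of R with x̄_i := x_i^{−1}, let a = (a_1, a_2, …) be a sequence in R, and let m be any integer. Then h^{oo}_m((x_1,…,x_{k−1}),(x̄_1,…,x̄_{k−1})|a) − h^{oo}_m((x_2,…,x_k),(x̄_2,…,x̄_k)|a) = (x_1 + x̄_1 − x_k − x̄_k) · h^{oo}_{m−1}((x_1,…,x_k),(x̄_1,…,x̄_k)|a). -/

import Mathlib

open Finset

noncomputable def geom {R : Type*} [CommRing R] (x : R) : PowerSeries R :=
  PowerSeries.mk fun k => x ^ k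

noncomputable def lin {R : Type*} [CommRing R] (a : R) : PowerSeries R :=
  1 + PowerSeries.C a * PowerSeries.X

noncomputable def facpow {R : Type*} [CommRing R] (x : R) (a : ℕ → R) (m : ℕ) : R :=
  ∏ j ∈ Finset.range m, (x + a (j + 1))

noncomputable def hgl {R : Type*} [CommRing R] {n : ℕ} (x : Fin n → R) (a : ℕ → R) (m : ℤ) : R :=
  if 0 ≤ m then
    PowerSeries.coeff m.toNat
      ((∏ i, geom (x i)) * ∏ j ∈ Finset.range (n + m.toNat - 1), lin (a (j + 1)))
  else 0

noncomputable def hsp {R : Type*} [CommRing R] {n : ℕ} (x : Fin n → Rˣ) (a : ℕ → R) (m : ℤ) : R :=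
  if 0 ≤ m then
    PowerSeries.coeff m.toNat
      ((∏ i, geom ((x i : R)) * geom (((x i)⁻¹ : Rˣ) : R)) *
        ∏ j ∈ Finset.range (n + m.toNat - 1), lin (a (j + 1)))
  else 0

noncomputable def hoo {R : Type*} [CommRing R] {n : ℕ} (x : Fin n → Rˣ) (a : ℕ → R) (m : ℤ) : R :=
  if 0 ≤ m then
    PowerSeries.coeff m.toNat
      ((1 + PowerSeries.X) * (∏ i, geom ((x i : R)) * geom (((x i)⁻¹ : Rˣ) : R)) *
        ∏ j ∈ Finset.range (n + m.toNat - 1), lin (a (j + 1)))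
  else 0

noncomputable def heo {R : Type*} [CommRing R] {n : ℕ} (x : Fin n → Rˣ) (a : ℕ → R) (m : ℤ) : R :=
  if 0 ≤ m then
    if h : n = 1 then
      (PowerSeries.coeff m.toNat
        ((geom ((x ⟨0, by omega⟩ : Rˣ) : R) + geom (((x ⟨0, by omega⟩)⁻¹ : Rˣ) : R)) *
          ∏ j ∈ Finset.range m.toNat, lin (a (j + 1))))
        - (if m = 0 then 1 else 0)
    else
      PowerSeries.coeff m.toNat
        ((1 - PowerSeries.X ^ 2) * (∏ i, geom ((x i : R)) * geom (((x i)⁻¹ : Rˣ) : R)) *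
          ∏ j ∈ Finset.range (n + m.toNat - 1), lin (a (j + 1)))
  else 0

noncomputable def heod {R : Type*} [CommRing R] {n : ℕ} (x : Fin n → Rˣ) (a : ℕ → R) (m : ℤ) : R :=
  if 0 < m then
    if h : 0 < n then
      PowerSeries.coeff m.toNat
        ((geom ((x ⟨0, h⟩ : Rˣ) : R) - geom (((x ⟨0, h⟩)⁻¹ : Rˣ) : R)) *
          (∏ i ∈ Finset.univ.filter (fun i : Fin n => i ≠ ⟨0, h⟩),
            geom ((x i : R)) * geom (((x i)⁻¹ : Rˣ) : R)) *
          ∏ j ∈ Finset.range (n + m.toNat - 1), lin (a (j + 1)))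
    else 0
  else 0

/-!
Every factor `(1 - t x)⁻¹ (1 - t x̄)⁻¹` has the inverse `1 - (x + x̄) t + t²`. Dropping `x_k`,
resp. `x_1`, from the full product therefore multiplies it by `1 - (x_k + x̄_k) t + t²`,
resp. `1 - (x_1 + x̄_1) t + t²`, and the difference of the two truncated products is
`(x_1 + x̄_1 - x_k - x̄_k) t` times the full product; the factor `t` shifts `m` to `m - 1`.
-/

open PowerSeries

theorem Fin.prod_castSucc_sub_prod_succ_of_mul_eq_one {M : Type*} [CommRing M] {n : ℕ}
    (g p : Fin (n + 1) → M) (h₀ : g 0 * p 0 = 1) (hlast : g (Fin.last n) * p (Fin.last n) = 1) :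
    ∏ i : Fin n, g i.castSucc - ∏ i : Fin n, g i.succ = (p (Fin.last n) - p 0) * ∏ i, g i := by
  have hcast : ∏ i : Fin n, g i.castSucc = p (Fin.last n) * ∏ i, g i := by
    rw [Fin.prod_univ_castSucc]
    linear_combination -(∏ i : Fin n, g i.castSucc) * hlast
  have hsucc : ∏ i : Fin n, g i.succ = p 0 * ∏ i, g i := by
    rw [Fin.prod_univ_succ]
    linear_combination -(∏ i : Fin n, g i.succ) * h₀
  rw [hcast, hsucc, sub_mul]

section

variable {R : Type*} [CommRing R]

theorem geom_eq_rescale (x : R) : geom x = rescale x (mk 1) := by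
  ext n
  simp [geom, coeff_rescale]

theorem geom_mul_one_sub_C_mul_X (x : R) : geom x * (1 - C x * X) = 1 := by
  rw [geom_eq_rescale, ← rescale_X, ← map_one (rescale x), ← map_sub, ← map_mul,
    mk_one_mul_one_sub_eq_one, map_one]

theorem geom_mul_geom_inv_mul_eq_one (u : Rˣ) :
    geom (u : R) * geom ((u⁻¹ : Rˣ) : R) * (1 - C ((u : R) + (u⁻¹ : Rˣ)) * X + X ^ 2) = 1 := by
  have hfactor : 1 - C ((u : R) + (u⁻¹ : Rˣ)) * X + X ^ 2 =
      (1 - C (u : R) * X) * (1 - C ((u⁻¹ : Rˣ) : R) * X) := by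
    have hu : C (u : R) * C ((u⁻¹ : Rˣ) : R) = 1 := by rw [← map_mul, Units.mul_inv, map_one]
    rw [map_add]
    linear_combination -X ^ 2 * hu
  rw [hfactor, mul_mul_mul_comm, geom_mul_one_sub_C_mul_X, geom_mul_one_sub_C_mul_X, mul_one]

theorem hoo_sub_hoo_of_prod_sub_prod {n : ℕ} {y z : Fin n → Rˣ} {w : Fin (n + 1) → Rˣ} {c : R}
    (a : ℕ → R) (m : ℤ)
    (h : ∏ i, geom (y i : R) * geom (((y i)⁻¹ : Rˣ) : R)
        - ∏ i, geom (z i : R) * geom (((z i)⁻¹ : Rˣ) : R)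
      = C c * X * ∏ i, geom (w i : R) * geom (((w i)⁻¹ : Rˣ) : R)) :
    hoo y a m - hoo z a m = c * hoo w a (m - 1) := by
  rcases lt_or_ge m 0 with hm | hm
  · simp [hoo, hm.not_ge, show ¬1 ≤ m by omega]
  lift m to ℕ using hm
  simp only [hoo, Nat.cast_nonneg, if_true, Int.toNat_natCast, ← map_sub, ← sub_mul, ← mul_sub, h]
  cases m with
  | zero => simp
  | succ p =>
    rw [if_pos (by omega), show ((p + 1 : ℕ) - 1 : ℤ).toNat = p by omega,
      show n + (p + 1) - 1 = n + 1 + p - 1 by omega, ← coeff_C_mul, ← coeff_succ_mul_X p]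
    congr 1
    ring

end

/-- recurrence relation for `h^oo`. -/
theorem hoo_recurrence {R : Type*} [CommRing R] (k : ℕ) (hk : 2 ≤ k)
    (x : Fin k → Rˣ) (a : ℕ → R) (m : ℤ) :
    hoo (fun i : Fin (k - 1) => x ⟨(i : ℕ), by have := i.isLt; omega⟩) a m
      - hoo (fun i : Fin (k - 1) => x ⟨(i : ℕ) + 1, by have := i.isLt; omega⟩) a m =
    ((x ⟨0, by omega⟩ : R) + (((x ⟨0, by omega⟩)⁻¹ : Rˣ) : R)
        - (x ⟨k - 1, by omega⟩ : R) - (((x ⟨k - 1, by omega⟩)⁻¹ : Rˣ) : R)) *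
      hoo x a (m - 1) := by
  obtain ⟨n, rfl⟩ : ∃ n, k = n + 1 := ⟨k - 1, by omega⟩
  apply hoo_sub_hoo_of_prod_sub_prod (n := n)
  refine (Fin.prod_castSucc_sub_prod_succ_of_mul_eq_one
    (fun i => geom (x i : R) * geom (((x i)⁻¹ : Rˣ) : R))
    (fun i => 1 - C ((x i : R) + ((x i)⁻¹ : Rˣ)) * X + X ^ 2)
    (geom_mul_geom_inv_mul_eq_one _) (geom_mul_geom_inv_mul_eq_one _)).trans ?_
  show _ = C ((x 0 : R) + ((x 0)⁻¹ : Rˣ) - x (Fin.last n) - ((x (Fin.last n))⁻¹ : Rˣ)) * X * _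
  simp only [map_sub, map_add]
  ring
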